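/- arXiv:2304.12158 — 3 statements merged into one kernel-verified Lean document; each statement's English description precedes it below -/
import Mathlib

section
/- For every n ∈ {1,…,d−1}, Cut_n maps S_{n+2} into S_n (i.e., τ̄ ∈ S_{n+2} implies Cut_n(τ̄) ∈ S_n), and Cut_n is n-stable on S_{n+2}, i.e., Cut_n(τ̄)_i = τ_i for every τ̄ ∈ S_{n+2} and every i ∈ {1,…,n−1}. -/
open scoped Classical

/-- `Δ(τ̄)_i = δ(τ₁,…,τ_{i−1},τ_i,τ_i,…,τ_i)` (with 0-based indices, the `j`-th
argument of `δ` is `τ_{min i j}`). -/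
def Delta {V : Type*} [CompleteLattice V] {d : ℕ} (δ : (Fin d → V) → V)
    (τ : Fin d → V) : Fin d → V :=
  fun i => δ (fun j => τ (min i j))

/-- `δ` is chain-continuous: it commutes with suprema and infima of nonempty chains. -/
def ChainContinuous {V : Type*} [CompleteLattice V] {d : ℕ} (δ : (Fin d → V) → V) : Prop :=
  ∀ C : Set (Fin d → V), C.Nonempty → IsChain (· ≤ ·) C →
    δ (sSup C) = sSup (δ '' C) ∧ δ (sInf C) = sInf (δ '' C)

/-- The parity order `1 ≺ 3 ≺ 5 ≺ ⋯ ≺ 6 ≺ 4 ≺ 2` (on positive naturals). -/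
def ParityLE (m n : ℕ) : Prop :=
  (Odd m ∧ Even n) ∨ (Odd m ∧ Odd n ∧ m ≤ n) ∨ (Even m ∧ Even n ∧ n ≤ m)

/-- `τ̄` is ordered: `τ_i ≤ τ_j` whenever `i ⪯ j` in the parity order
(1-based positions). -/
def IsOrdered {V : Type*} [CompleteLattice V] {d : ℕ} (τ : Fin d → V) : Prop :=
  ∀ i j : Fin d, ParityLE (i.val + 1) (j.val + 1) → τ i ≤ τ j

/-- `τ̄` is `n`-fixed: all coordinates at 1-based positions `≥ n` are equal
(to the coordinate at position `n`). -/
def IsNFixed {V : Type*} {d : ℕ} (n : ℕ) (τ : Fin d → V) : Prop :=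
  ∀ i j : Fin d, n ≤ i.val + 1 → n ≤ j.val + 1 → τ i = τ j

/-- `τ̄` is `n`-saturated: `Δ(τ̄)_i = τ_i` for all 1-based positions `i ≤ n − 1`. -/
def IsNSaturated {V : Type*} [CompleteLattice V] {d : ℕ} (δ : (Fin d → V) → V)
    (n : ℕ) (τ : Fin d → V) : Prop :=
  ∀ i : Fin d, i.val + 2 ≤ n → Delta δ τ i = τ i

/-- The set `S_n ⊆ V^d`. -/
def SN {V : Type*} [CompleteLattice V] {d : ℕ} (δ : (Fin d → V) → V) (n : ℕ) :
    Set (Fin d → V) :=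
  {τ | IsOrdered τ ∧ IsNFixed n τ ∧ IsNSaturated δ n τ ∧
    (Odd n → τ ≤ Delta δ τ) ∧ (Even n → Delta δ τ ≤ τ)}

/-- `Bid_n(τ̄)_i = τ_i` for `i ≤ n−1` and `= τ_{n−2}` for `i ≥ n`
(with `τ₋₁ = ⊥`, `τ₀ = ⊤`; 1-based positions). -/
def Bid {V : Type*} [CompleteLattice V] {d : ℕ} (n : ℕ) (τ : Fin d → V) : Fin d → V :=
  fun i =>
    if i.val + 2 ≤ n then τ i
    else if n = 1 then ⊥
    else if n = 2 then ⊤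
    else if h : n - 3 < d then τ ⟨n - 3, h⟩ else ⊥

/-- `Cut_n(τ̄)_i = τ_i` for `i ≤ n−1` and `= τ_{n+1}` for `i ≥ n` (1-based positions). -/
def Cut {V : Type*} [CompleteLattice V] {d : ℕ} (n : ℕ) (τ : Fin d → V) : Fin d → V :=
  fun i =>
    if i.val + 2 ≤ n then τ i
    else if h : n < d then τ ⟨n, h⟩ else ⊥

lemma parityLE_iff (m n : ℕ) : ParityLE m n ↔
    ((m % 2 = 1 ∧ n % 2 = 0) ∨ (m % 2 = 1 ∧ n % 2 = 1 ∧ m ≤ n) ∨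
      (m % 2 = 0 ∧ n % 2 = 0 ∧ n ≤ m)) := by
  simp [ParityLE, Nat.odd_iff, Nat.even_iff]

/-- For `n ∈ {1,…,d−1}`, `Cut_n` maps `S_{n+2}` into `S_n` and is
`n`-stable on `S_{n+2}`: `Cut_n(τ̄)_i = τ_i` for `τ̄ ∈ S_{n+2}` and positions
`i ≤ n − 1`. -/
theorem stmt10 {V : Type*} [CompleteLattice V] {d : ℕ} (hd : 1 ≤ d) (hde : Even d)
    (δ : (Fin d → V) → V) (hmono : Monotone δ) (hcont : ChainContinuous δ)
    (n : ℕ) (hn1 : 1 ≤ n) (hnd : n < d) :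
    (∀ τ ∈ SN δ (n + 2), Cut n τ ∈ SN δ n) ∧
    (∀ τ ∈ SN δ (n + 2), ∀ i : Fin d, i.val + 2 ≤ n → Cut n τ i = τ i) := by
  have hcut : ∀ (τ : Fin d → V) (i : Fin d),
      Cut n τ i = if i.val + 2 ≤ n then τ i else τ ⟨n, hnd⟩ := by
    intro τ i
    unfold Cut
    simp only [dif_pos hnd]
  constructor
  · intro τ hτ
    obtain ⟨hord, hfix, hsat, hodd, heven⟩ := hτ
    set N : Fin d := ⟨n, hnd⟩ with hNdef
    have hNval : N.val = n := rfl
    -- saturation of Cut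
    have hsat' : ∀ i : Fin d, i.val + 2 ≤ n → Delta δ (Cut n τ) i = Cut n τ i := by
      intro i hi
      have h1 : Delta δ (Cut n τ) i = Delta δ τ i := by
        unfold Delta
        congr 1
        funext j
        have hm : (min i j).val ≤ i.val := Fin.le_def.mp (min_le_left i j)
        rw [hcut, if_pos (by omega)]
      rw [h1, hsat i (by omega), hcut, if_pos hi]
    -- comparison lemma
    have hcmp : ∀ (i j : Fin d), ¬ (i.val + 2 ≤ n) →
        (Odd n → τ (min N j) ≤ Cut n τ (min i j)) ∧
        (Even n → Cut n τ (min i j) ≤ τ (min N j)) := by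
      intro i j hi
      have hmv : (min i j).val = min i.val j.val := by
        rcases le_total i j with h | h
        · rw [min_eq_left h, min_eq_left (Fin.le_def.mp h)]
        · rw [min_eq_right h, min_eq_right (Fin.le_def.mp h)]
      rw [hcut]
      by_cases hj : (min i j).val + 2 ≤ n
      · rw [if_pos hj]
        have h1 : min i j = j := min_eq_right (by rw [Fin.le_def]; omega)
        have h2 : min N j = j := min_eq_right (by rw [Fin.le_def, hNval]; omega)
        rw [h1, h2]
        exact ⟨fun _ => le_rfl, fun _ => le_rfl⟩
      · rw [if_neg hj]
        by_cases hjn : n ≤ j.val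
        · have h2 : min N j = N := min_eq_left (by rw [Fin.le_def, hNval]; omega)
          rw [h2]
          exact ⟨fun _ => le_rfl, fun _ => le_rfl⟩
        · have hj1 : j.val = n - 1 := by omega
          have h2 : min N j = j := min_eq_right (by rw [Fin.le_def, hNval]; omega)
          rw [h2]
          constructor
          · intro hno
            apply hord j N
            rw [parityLE_iff]
            rw [Nat.odd_iff] at hno
            rw [hNval]
            omega
          · intro hne
            apply hord N j
            rw [parityLE_iff]
            rw [Nat.even_iff] at hne
            rw [hNval]
            omega
    have hordc : IsOrdered (Cut n τ) := by
      intro i j hij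
      rw [hcut, hcut]
      rw [parityLE_iff] at hij
      split_ifs with hi hj hj
      · exact hord i j (by rw [parityLE_iff]; omega)
      · exact hord i N (by rw [parityLE_iff, hNval]; omega)
      · exact hord N j (by rw [parityLE_iff, hNval]; omega)
      · exact le_rfl
    have hfixc : IsNFixed n (Cut n τ) := by
      intro i j hi hj
      rw [hcut, hcut, if_neg (by omega), if_neg (by omega)]
    refine ⟨hordc, hfixc, hsat', ?_, ?_⟩
    · intro hno
      have hτΔ : τ ≤ Delta δ τ := hodd (by
        rcases hno with ⟨k, hk⟩; exact ⟨k + 1, by omega⟩)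
      rw [Pi.le_def]
      intro i
      by_cases hi : i.val + 2 ≤ n
      · rw [hsat' i hi]
      · rw [hcut, if_neg hi]
        calc τ N ≤ Delta δ τ N := hτΔ N
          _ ≤ Delta δ (Cut n τ) i := hmono (fun j => (hcmp i j hi).1 hno)
    · intro hne
      have hτΔ : Delta δ τ ≤ τ := heven (by
        rcases hne with ⟨k, hk⟩; exact ⟨k + 1, by omega⟩)
      rw [Pi.le_def]
      intro i
      by_cases hi : i.val + 2 ≤ n
      · rw [hsat' i hi]
      · rw [hcut, if_neg hi]
        calc Delta δ (Cut n τ) i ≤ Delta δ τ N :=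
              hmono (fun j => (hcmp i j hi).2 hne)
          _ ≤ τ N := hτΔ N
  · intro τ _ i hi
    rw [hcut, if_pos hi]
end

section
/- For every n ∈ {1,…,d}: S_n ⊆ dom(Φ_n), for every τ̄ ∈ S_n one has Φ_n(τ̄) ∈ S_{n+1}, and Φ_n is n-stable on S_n, i.e., Φ_n(τ̄)_i = τ_i for every τ̄ ∈ S_n and every i ∈ {1,…,n−1}. -/
/-!
Downward induction on `n`. Fix `τ ∈ S_n`. All points that occur lie on the line
`w ↦ withTail n τ w` of tuples with head `τ₁, …, τ_{n-1}` and constant tail `w`. Since the head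
is saturated, `Δ` maps this line to itself, acting on tails as `g w = δ (withTail n τ w)`; the
ordered points of the line are the `w` in `[tailLowerBound n τ, tailUpperBound n τ]`, an interval
that `g` maps into itself, and `Bid_n τ` is its lower (odd `n`) or upper (even `n`) end.

For odd `n`, one round of `lim↑Δ ; Φ_{n+1} ; Cut_n` sends a post-fixed point `w ≤ g w` of the
interval to the least fixed point `u ≥ w` of `g`, and then to the coordinate `v` that `Φ_{n+1}`
places at position `n + 1`; the parity order and saturation give `u ≤ v ≤ g v`. The least fixed
points defining `lim↑` exist by Zorn's lemma, and at a fixed point of the round `w = u = v` is a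
fixed point of `g`, whose point on the line lies in `S_{n+1}`. Even `n` is the order dual.
-/

open scoped Classical

/-- A partial function `X ⇀ X`, given by a total function together with a domain. -/
structure PFunc (X : Type*) where
  toFun : X → X
  dom : Set X

/-- A total function, seen as a partial function. -/
def PFunc.total {X : Type*} (f : X → X) : PFunc X := ⟨f, Set.univ⟩

/-- The set of fixed points of a partial function. -/
def PFunc.Fix {X : Type*} (F : PFunc X) : Set X := {x | x ∈ F.dom ∧ F.toFun x = x}

/-- Composition `F;G : x ↦ G(F(x))` of partial functions. -/
def PFunc.comp {X : Type*} (F G : PFunc X) : PFunc X :=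
  ⟨fun x => G.toFun (F.toFun x), {x | x ∈ F.dom ∧ F.toFun x ∈ G.dom}⟩

/-- `lim↑F` maps `x` to the least fixed point of `F` that is `≥ x`; its domain is
the set of `x` for which such a least fixed point exists. -/
noncomputable def limUp {X : Type*} [PartialOrder X] (F : PFunc X) : PFunc X where
  toFun x := if h : ∃ y, IsLeast {z | z ∈ F.Fix ∧ x ≤ z} y then h.choose else x
  dom := {x | ∃ y, IsLeast {z | z ∈ F.Fix ∧ x ≤ z} y}

/-- `lim↓F` maps `x` to the greatest fixed point of `F` that is `≤ x`. -/
noncomputable def limDown {X : Type*} [PartialOrder X] (F : PFunc X) : PFunc X where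
  toFun x := if h : ∃ y, IsGreatest {z | z ∈ F.Fix ∧ z ≤ x} y then h.choose else x
  dom := {x | ∃ y, IsGreatest {z | z ∈ F.Fix ∧ z ≤ x} y}

/-- A partial function is monotone (order-preserving on its domain). -/
def MonotonePF {X : Type*} [Preorder X] (F : PFunc X) : Prop :=
  ∀ x ∈ F.dom, ∀ y ∈ F.dom, x ≤ y → F.toFun x ≤ F.toFun y

/-- `A` is a chain-complete subset: every nonempty chain contained in `A` has a
supremum and an infimum (in `X`) which belong to `A`. -/
def ChainCompleteIn {X : Type*} [Preorder X] (A : Set X) : Prop :=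
  ∀ C : Set X, C ⊆ A → C.Nonempty → IsChain (· ≤ ·) C →
    (∃ y ∈ A, IsLUB C y) ∧ (∃ y ∈ A, IsGLB C y)

/-- A monotone partial function `F` is ascending on `A`. -/
def AscendingOn {X : Type*} [Preorder X] (F : PFunc X) (A : Set X) : Prop :=
  MonotonePF F ∧ A ⊆ F.dom ∧ ChainCompleteIn A ∧ ∀ x ∈ A, F.toFun x ∈ A ∧ x ≤ F.toFun x

/-- A monotone partial function `F` is descending on `A`. -/
def DescendingOn {X : Type*} [Preorder X] (F : PFunc X) (A : Set X) : Prop :=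
  MonotonePF F ∧ A ⊆ F.dom ∧ ChainCompleteIn A ∧ ∀ x ∈ A, F.toFun x ∈ A ∧ F.toFun x ≤ x

/-- `F` is `n`-stable on `A`: `A ⊆ dom(F)` and `F` preserves the coordinates at
1-based positions `≤ n − 1` of every element of `A`. -/
def NStableOn {V : Type*} {d : ℕ} (F : PFunc (Fin d → V)) (n : ℕ)
    (A : Set (Fin d → V)) : Prop :=
  A ⊆ F.dom ∧ ∀ τ ∈ A, ∀ i : Fin d, i.val + 2 ≤ n → F.toFun τ i = τ i

/-- `PhiAux δ k = Φ_{d−k}`: the formulae `Φ_n`, defined by downward recursion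
`Φ_d = Bid_d ; lim↓Δ` and, for `n ≤ d−1`,
`Φ_n = Bid_n ; lim↑(lim↑Δ ; Φ_{n+1} ; Cut_n)` if `n` is odd, and
`Φ_n = Bid_n ; lim↓(lim↓Δ ; Φ_{n+1} ; Cut_n)` if `n` is even. -/
noncomputable def PhiAux {V : Type*} [CompleteLattice V] {d : ℕ}
    (δ : (Fin d → V) → V) : ℕ → PFunc (Fin d → V)
  | 0 => (PFunc.total (Bid d)).comp (limDown (PFunc.total (Delta δ)))
  | (k + 1) =>
      if Odd (d - (k + 1)) then
        (PFunc.total (Bid (d - (k + 1)))).comp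
          (limUp (((limUp (PFunc.total (Delta δ))).comp (PhiAux δ k)).comp
            (PFunc.total (Cut (d - (k + 1))))))
      else
        (PFunc.total (Bid (d - (k + 1)))).comp
          (limDown (((limDown (PFunc.total (Delta δ))).comp (PhiAux δ k)).comp
            (PFunc.total (Cut (d - (k + 1))))))

/-- The partial function `Φ_n : V^d ⇀ V^d`. -/
noncomputable def Phi {V : Type*} [CompleteLattice V] {d : ℕ}
    (δ : (Fin d → V) → V) (n : ℕ) : PFunc (Fin d → V) :=
  PhiAux δ (d - n)

open Set

section PartialMaps

variable {X : Type*}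

theorem exists_isLeast_fix [PartialOrder X] {F : PFunc X} {A : Set X} (hF : MonotonePF F)
    (hA : A ⊆ F.dom) (hmaps : ∀ x ∈ A, F.toFun x ∈ A) (hinfl : ∀ x ∈ A, x ≤ F.toFun x)
    (hchain : ∀ C ⊆ A, C.Nonempty → IsChain (· ≤ ·) C → ∃ y ∈ A, IsLUB C y)
    {σ : X} (hσ : σ ∈ A) : ∃ y ∈ A, IsLeast {z | z ∈ F.Fix ∧ σ ≤ z} y := by
  -- Zorn on the elements of `A` above `σ` lying below every fixed point above `σ`
  set P := {x ∈ A | σ ≤ x ∧ ∀ z ∈ F.Fix, σ ≤ z → x ≤ z}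
  have hFP : ∀ x ∈ P, F.toFun x ∈ P := fun x ⟨hxA, hσx, hx⟩ =>
    ⟨hmaps x hxA, hσx.trans (hinfl x hxA), fun z hz hσz =>
      hz.2 ▸ hF x (hA hxA) z hz.1 (hx z hz hσz)⟩
  obtain ⟨m, -, hmP, hmax⟩ := zorn_le_nonempty₀ P (fun C hCP hC y hy => by
    obtain ⟨u, huA, hu⟩ := hchain C (fun x hx => (hCP hx).1) ⟨y, hy⟩ hC
    exact ⟨u, ⟨huA, (hCP hy).2.1.trans (hu.1 hy), fun z hz hσz =>
      hu.2 fun x hx => (hCP hx).2.2 z hz hσz⟩, fun x hx => hu.1 hx⟩) σ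
    ⟨hσ, le_rfl, fun _ _ h => h⟩
  have hfix : F.toFun m = m := (hmax (hFP m hmP) (hinfl m hmP.1)).antisymm (hinfl m hmP.1)
  exact ⟨m, hmP.1, ⟨⟨hA hmP.1, hfix⟩, hmP.2.1⟩, fun z hz => hmP.2.2 z hz.1 hz.2⟩

theorem limUp_toFun_eq [PartialOrder X] {F : PFunc X} {x y : X}
    (h : IsLeast {z | z ∈ F.Fix ∧ x ≤ z} y) : (limUp F).toFun x = y := by
  have hex : ∃ y', IsLeast {z | z ∈ F.Fix ∧ x ≤ z} y' := ⟨y, h⟩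
  simp only [limUp, dif_pos hex]
  exact hex.choose_spec.unique h

theorem monotonePF_total [Preorder X] {f : X → X} (hf : Monotone f) :
    MonotonePF (PFunc.total f) := fun _ _ _ _ h => hf h

theorem MonotonePF.comp [Preorder X] {F G : PFunc X} (hF : MonotonePF F) (hG : MonotonePF G) :
    MonotonePF (F.comp G) := fun _ hx _ hy h => hG _ hx.2 _ hy.2 (hF _ hx.1 _ hy.1 h)

theorem monotonePF_limUp [PartialOrder X] (F : PFunc X) : MonotonePF (limUp F) := by
  rintro _ ⟨lx, hlx⟩ _ ⟨ly, hly⟩ hxy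
  rw [limUp_toFun_eq hlx, limUp_toFun_eq hly]
  exact hlx.2 ⟨hly.1.1, hxy.trans hly.1.2⟩

-- `limUp` over `Xᵒᵈ` unfolds to `limDown` over `X`, so `limDown` facts are duals of `limUp` facts.
theorem monotonePF_limDown [PartialOrder X] (F : PFunc X) : MonotonePF (limDown F) :=
  fun x hx y hy hxy => monotonePF_limUp (X := Xᵒᵈ) F y hy x hx hxy

section Line

variable {V : Type*} [CompleteLattice X] [CompleteLattice V] (t : V ↪o X)

theorem sSup_mem_Icc_postfixed {g : V → V} (hg : Monotone g) {a b : V} {S : Set V}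
    (hS : S ⊆ {u | u ∈ Icc a b ∧ u ≤ g u}) (hne : S.Nonempty) :
    sSup S ∈ {u | u ∈ Icc a b ∧ u ≤ g u} := by
  obtain ⟨s, hs⟩ := hne
  refine ⟨⟨(hS hs).1.1.trans (le_sSup hs), sSup_le fun u hu => (hS hu).1.2⟩, ?_⟩
  exact sSup_le fun u hu => (hS hu).2.trans (hg (le_sSup hu))

theorem exists_isLeast_fix_image (ht : ∀ S : Set V, S.Nonempty → t (sSup S) = sSup (t '' S))
    {F : PFunc X} (hF : MonotonePF F) {I : Set V}
    (hI : ∀ S ⊆ I, S.Nonempty → sSup S ∈ I)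
    (hstep : ∀ w ∈ I, t w ∈ F.dom ∧ ∃ w' ∈ I, w ≤ w' ∧ F.toFun (t w) = t w')
    {w : V} (hw : w ∈ I) : ∃ u ∈ I, IsLeast {z | z ∈ F.Fix ∧ t w ≤ z} (t u) := by
  have hchain : ∀ C ⊆ t '' I, C.Nonempty → ∃ y ∈ t '' I, IsLUB C y := by
    intro C hC hne
    obtain ⟨S, hSI, rfl⟩ := subset_image_iff.1 hC
    exact ⟨t (sSup S), mem_image_of_mem t (hI S hSI hne.of_image),
      ht S hne.of_image ▸ isLUB_sSup _⟩
  obtain ⟨y, ⟨u, hu, rfl⟩, hy⟩ := exists_isLeast_fix hF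
    (by rintro _ ⟨w, hw, rfl⟩; exact (hstep w hw).1)
    (by
      rintro _ ⟨w, hw, rfl⟩
      obtain ⟨-, w', hw', -, h⟩ := hstep w hw
      exact h ▸ mem_image_of_mem t hw')
    (by
      rintro _ ⟨w, hw, rfl⟩
      obtain ⟨-, w', -, hww', h⟩ := hstep w hw
      exact h ▸ t.monotone hww')
    (fun C hC hne _ => hchain C hC hne) (mem_image_of_mem t hw)
  exact ⟨u, hu, hy⟩

variable {t} {Δ : X → X} {g : V → V}

theorem monotone_of_map_eq (hΔ : Monotone Δ) (hΔg : ∀ w, Δ (t w) = t (g w)) : Monotone g :=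
  fun a b h => t.le_iff_le.1 <| by simpa only [hΔg] using hΔ (t.monotone h)

theorem exists_limUp_total_apply (ht : ∀ S : Set V, S.Nonempty → t (sSup S) = sSup (t '' S))
    (hΔ : Monotone Δ) (hΔg : ∀ w, Δ (t w) = t (g w)) {w hi : V}
    (hw : w ≤ g w) (hwhi : w ≤ hi) (hhi : g hi ≤ hi) :
    ∃ u ∈ Icc w hi, g u = u ∧ t w ∈ (limUp (PFunc.total Δ)).dom ∧
      (limUp (PFunc.total Δ)).toFun (t w) = t u := by
  have hg := monotone_of_map_eq hΔ hΔg
  obtain ⟨u, hu, hleast⟩ := exists_isLeast_fix_image t ht (monotonePF_total hΔ)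
    (I := {u | u ∈ Icc w hi ∧ u ≤ g u}) (fun S hS hne => sSup_mem_Icc_postfixed hg hS hne)
    (fun u ⟨⟨hwu, huhi⟩, hu⟩ => ⟨trivial, g u,
      ⟨⟨hwu.trans hu, (hg huhi).trans hhi⟩, hg hu⟩, hu, hΔg u⟩)
    ⟨⟨le_rfl, hwhi⟩, hw⟩
  refine ⟨u, hu.1, t.injective ((hΔg u).symm.trans hleast.1.1.2), ⟨_, hleast⟩,
    limUp_toFun_eq hleast⟩

theorem exists_limUp_step_apply (ht : ∀ S : Set V, S.Nonempty → t (sSup S) = sSup (t '' S))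
    (hΔ : Monotone Δ) (hΔg : ∀ w, Δ (t w) = t (g w)) {G : PFunc X}
    (hG : MonotonePF G) {cut : X → X} (hcut : Monotone cut) {lo hi : V} (hlo : lo ≤ g lo)
    (hlohi : lo ≤ hi) (hhi : g hi ≤ hi)
    (hout : ∀ u ∈ Icc lo hi, g u = u →
      t u ∈ G.dom ∧ ∃ v ∈ Icc u hi, v ≤ g v ∧ cut (G.toFun (t u)) = t v) :
    ∃ w ∈ Icc lo hi, g w = w ∧
      t lo ∈ (limUp (((limUp (PFunc.total Δ)).comp G).comp (PFunc.total cut))).dom ∧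
      (limUp (((limUp (PFunc.total Δ)).comp G).comp (PFunc.total cut))).toFun (t lo) = t w := by
  set F := ((limUp (PFunc.total Δ)).comp G).comp (PFunc.total cut)
  set I := {u | u ∈ Icc lo hi ∧ u ≤ g u}
  have hround : ∀ w ∈ I, ∃ u v, w ≤ u ∧ u ≤ v ∧ g u = u ∧ v ∈ I ∧
      t w ∈ F.dom ∧ F.toFun (t w) = t v := by
    rintro w ⟨⟨hlow, hwhi⟩, hw⟩
    obtain ⟨u, ⟨hwu, huhi⟩, hgu, hdom, hval⟩ := exists_limUp_total_apply ht hΔ hΔg hw hwhi hhi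
    obtain ⟨hGdom, v, ⟨huv, hvhi⟩, hv, hcutv⟩ := hout u ⟨hlow.trans hwu, huhi⟩ hgu
    refine ⟨u, v, hwu, huv, hgu, ⟨⟨hlow.trans (hwu.trans huv), hvhi⟩, hv⟩,
      ⟨⟨hdom, hval ▸ hGdom⟩, trivial⟩, ?_⟩
    change cut (G.toFun ((limUp (PFunc.total Δ)).toFun (t w))) = t v
    rw [hval, hcutv]
  obtain ⟨w, hw, hleast⟩ := exists_isLeast_fix_image t ht
    ((monotonePF_limUp _).comp hG |>.comp (monotonePF_total hcut))
    (fun S hS hne => sSup_mem_Icc_postfixed (monotone_of_map_eq hΔ hΔg) hS hne)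
    (fun w hw => by
      obtain ⟨u, v, hwu, huv, -, hv, hdom, hval⟩ := hround w hw
      exact ⟨hdom, v, hv, hwu.trans huv, hval⟩)
    ⟨⟨le_rfl, hlohi⟩, hlo⟩
  obtain ⟨u, v, hwu, huv, hgu, -, -, hval⟩ := hround w hw
  have hvw : v = w := t.injective (hval.symm.trans hleast.1.1.2)
  have huw : u = w := le_antisymm (hvw ▸ huv) hwu
  exact ⟨w, hw.1, huw ▸ hgu, ⟨_, hleast⟩, limUp_toFun_eq hleast⟩

theorem exists_limDown_total_apply (ht : ∀ S : Set V, S.Nonempty → t (sInf S) = sInf (t '' S))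
    (hΔ : Monotone Δ) (hΔg : ∀ w, Δ (t w) = t (g w)) {lo w : V}
    (hw : g w ≤ w) (hlow : lo ≤ w) (hlo : lo ≤ g lo) :
    ∃ u ∈ Icc lo w, g u = u ∧ t w ∈ (limDown (PFunc.total Δ)).dom ∧
      (limDown (PFunc.total Δ)).toFun (t w) = t u := by
  obtain ⟨u, ⟨hwu, hulo⟩, h⟩ :=
    exists_limUp_total_apply (X := Xᵒᵈ) (t := t.dual) ht hΔ.dual hΔg hw hlow hlo
  exact ⟨u, ⟨hulo, hwu⟩, h⟩

theorem exists_limDown_step_apply (ht : ∀ S : Set V, S.Nonempty → t (sInf S) = sInf (t '' S))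
    (hΔ : Monotone Δ) (hΔg : ∀ w, Δ (t w) = t (g w)) {G : PFunc X}
    (hG : MonotonePF G) {cut : X → X} (hcut : Monotone cut) {lo hi : V} (hhi : g hi ≤ hi)
    (hlohi : lo ≤ hi) (hlo : lo ≤ g lo)
    (hout : ∀ u ∈ Icc lo hi, g u = u →
      t u ∈ G.dom ∧ ∃ v ∈ Icc lo u, g v ≤ v ∧ cut (G.toFun (t u)) = t v) :
    ∃ w ∈ Icc lo hi, g w = w ∧
      t hi ∈ (limDown (((limDown (PFunc.total Δ)).comp G).comp (PFunc.total cut))).dom ∧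
      (limDown (((limDown (PFunc.total Δ)).comp G).comp (PFunc.total cut))).toFun (t hi) =
        t w := by
  obtain ⟨w, ⟨hhiw, hwlo⟩, h⟩ :=
    exists_limUp_step_apply (X := Xᵒᵈ) (t := t.dual) ht hΔ.dual hΔg
      (fun x hx y hy hxy => hG y hy x hx hxy) hcut.dual hhi hlohi hlo
      (fun u ⟨hhiu, hulo⟩ hu => by
        obtain ⟨hdom, v, ⟨hlov, hvu⟩, hv, hcutv⟩ := hout u ⟨hulo, hhiu⟩ hu
        exact ⟨hdom, v, ⟨hvu, hlov⟩, hv, hcutv⟩)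
  exact ⟨w, ⟨hwlo, hhiw⟩, h⟩

end Line

end PartialMaps

section Tuples

variable {V : Type*} {d n : ℕ}

def withTail (n : ℕ) (τ : Fin d → V) (w : V) : Fin d → V :=
  fun i => if i.val + 2 ≤ n then τ i else w

theorem withTail_apply_of_lt {τ : Fin d → V} {w : V} {i : Fin d} (h : i.val + 2 ≤ n) :
    withTail n τ w i = τ i := if_pos h

theorem withTail_apply_of_le {τ : Fin d → V} {w : V} {i : Fin d} (h : n ≤ i.val + 1) :
    withTail n τ w i = w := if_neg (by omega)

theorem isNFixed_withTail {m : ℕ} (τ : Fin d → V) (w : V) (h : n ≤ m) :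
    IsNFixed m (withTail n τ w) := fun i j hi hj => by
  rw [withTail_apply_of_le (by omega), withTail_apply_of_le (by omega)]

theorem withTail_mono [Preorder V] (τ : Fin d → V) : Monotone (withTail n τ) := fun _ _ h i => by
  unfold withTail
  split_ifs
  exacts [le_rfl, h]

theorem withTail_le_withTail_iff [Preorder V] (τ : Fin d → V) (h : n - 1 < d) {v w : V} :
    withTail n τ v ≤ withTail n τ w ↔ v ≤ w := by
  refine ⟨fun hvw => ?_, fun hvw => withTail_mono τ hvw⟩
  have hi := hvw ⟨n - 1, h⟩
  rwa [withTail_apply_of_le (by dsimp only; omega),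
    withTail_apply_of_le (by dsimp only; omega)] at hi

def withTailEmb [PartialOrder V] (τ : Fin d → V) (h : n - 1 < d) : V ↪o (Fin d → V) :=
  OrderEmbedding.ofMapLEIff (withTail n τ) fun _ _ => withTail_le_withTail_iff τ h

theorem withTail_sSup [CompleteLattice V] (τ : Fin d → V) {S : Set V} (hS : S.Nonempty) :
    withTail n τ (sSup S) = sSup (withTail n τ '' S) := by
  ext i
  rw [sSup_image, iSup_apply]
  simp only [iSup_apply]
  unfold withTail
  split_ifs
  · exact (biSup_const hS).symm
  · exact sSup_eq_iSup

theorem withTail_sInf [CompleteLattice V] (τ : Fin d → V) {S : Set V} (hS : S.Nonempty) :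
    withTail n τ (sInf S) = sInf (withTail n τ '' S) :=
  withTail_sSup (V := Vᵒᵈ) τ hS

end Tuples

section Delta

variable {V : Type*} [CompleteLattice V] {d n : ℕ} {δ : (Fin d → V) → V}

theorem Delta_mono (hmono : Monotone δ) : Monotone (Delta δ) :=
  fun _ _ h i => hmono fun j => h (min i j)

theorem Delta_withTail {τ : Fin d → V} (hsat : IsNSaturated δ n τ) (w : V) :
    Delta δ (withTail n τ w) = withTail n τ (δ (withTail n τ w)) := by
  ext i
  by_cases hi : i.val + 2 ≤ n
  · rw [withTail_apply_of_lt hi, ← hsat i hi]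
    refine congrArg δ (funext fun j => withTail_apply_of_lt ?_)
    have := min_le_left i j
    rw [Fin.le_def] at this
    omega
  · rw [withTail_apply_of_le (by omega)]
    refine congrArg δ (funext fun j => ?_)
    rcases le_total i j with hij | hji
    · rw [min_eq_left hij, withTail_apply_of_le (by omega),
        withTail_apply_of_le (by rw [Fin.le_def] at hij; omega)]
    · rw [min_eq_right hji]

theorem mem_SN_of_Delta_eq {m : ℕ} {x : Fin d → V} (hord : IsOrdered x) (hfix : IsNFixed m x)
    (hΔ : Delta δ x = x) : x ∈ SN δ m :=
  ⟨hord, hfix, fun i _ => congrFun hΔ i, fun _ => hΔ.ge, fun _ => hΔ.le⟩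

end Delta

theorem ParityLE.odd_of_lt {a b : ℕ} (h : ParityLE a b) (hab : a < b) : Odd a := by
  rcases h with ⟨ha, -⟩ | ⟨ha, -⟩ | ⟨-, -, hba⟩
  exacts [ha, ha, absurd hba (by omega)]

theorem ParityLE.even_of_lt {a b : ℕ} (h : ParityLE a b) (hba : b < a) : Even b := by
  rcases h with ⟨-, hb⟩ | ⟨-, -, hab⟩ | ⟨-, hb, -⟩
  exacts [hb, absurd hab (by omega), hb]

theorem parityLE_of_odd {a b : ℕ} (ha : Odd a) (hab : a ≤ b) : ParityLE a b := by
  rcases Nat.even_or_odd b with hb | hb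
  exacts [Or.inl ⟨ha, hb⟩, Or.inr (Or.inl ⟨ha, hb, hab⟩)]

theorem parityLE_of_even {a b : ℕ} (ha : Even a) (hab : a ≤ b) : ParityLE b a := by
  rcases Nat.even_or_odd b with hb | hb
  exacts [Or.inr (Or.inr ⟨hb, ha, hab⟩), Or.inl ⟨hb, ha⟩]

section TailBounds

variable {V : Type*} [CompleteLattice V] {d n : ℕ}

/-- With `tailUpperBound`, the bounds that the parity order puts on the coordinates at positions
`≥ n` of an ordered tuple with head `τ` (see `mem_Icc_tailBounds`). Empty suprema and infima give
the conventions `τ₋₁ = ⊥` and `τ₀ = ⊤`. -/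
def tailLowerBound (n : ℕ) (τ : Fin d → V) : V :=
  ⨆ (j : Fin d) (_ : j.val + 2 ≤ n) (_ : Odd (j.val + 1)), τ j

def tailUpperBound (n : ℕ) (τ : Fin d → V) : V :=
  ⨅ (j : Fin d) (_ : j.val + 2 ≤ n) (_ : Even (j.val + 1)), τ j

theorem le_tailLowerBound (τ : Fin d → V) {j : Fin d} (hj : j.val + 2 ≤ n)
    (hjo : Odd (j.val + 1)) : τ j ≤ tailLowerBound n τ :=
  le_iSup₂_of_le j hj (le_iSup_of_le hjo le_rfl)

theorem tailUpperBound_le (τ : Fin d → V) {j : Fin d} (hj : j.val + 2 ≤ n)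
    (hje : Even (j.val + 1)) : tailUpperBound n τ ≤ τ j :=
  iInf₂_le_of_le j hj (iInf_le_of_le hje le_rfl)

theorem mem_Icc_tailBounds {τ x : Fin d → V} (hx : IsOrdered x)
    (hxτ : ∀ j : Fin d, j.val + 2 ≤ n → x j = τ j) {i : Fin d} (hi : n ≤ i.val + 1) :
    x i ∈ Icc (tailLowerBound n τ) (tailUpperBound n τ) := by
  constructor
  · refine iSup₂_le fun j hj => iSup_le fun hjo => ?_
    rw [← hxτ j hj]
    exact hx j i (parityLE_of_odd hjo (by omega))
  · refine le_iInf₂ fun j hj => le_iInf fun hje => ?_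
    rw [← hxτ j hj]
    exact hx i j (parityLE_of_even hje (by omega))

theorem isOrdered_withTail {τ : Fin d → V} (hτ : IsOrdered τ) {w : V}
    (hw : w ∈ Icc (tailLowerBound n τ) (tailUpperBound n τ)) : IsOrdered (withTail n τ w) := by
  intro i j hij
  by_cases hi : i.val + 2 ≤ n <;> by_cases hj : j.val + 2 ≤ n
  · rw [withTail_apply_of_lt hi, withTail_apply_of_lt hj]
    exact hτ i j hij
  · rw [withTail_apply_of_lt hi, withTail_apply_of_le (by omega)]
    exact (le_tailLowerBound τ hi (hij.odd_of_lt (by omega))).trans hw.1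
  · rw [withTail_apply_of_le (by omega), withTail_apply_of_lt hj]
    exact hw.2.trans (tailUpperBound_le τ hj (hij.even_of_lt (by omega)))
  · rw [withTail_apply_of_le (by omega), withTail_apply_of_le (by omega)]

variable {δ : (Fin d → V) → V}

theorem tailLowerBound_le_delta (hmono : Monotone δ) {τ : Fin d → V} (hτ : IsOrdered τ)
    (hsat : IsNSaturated δ n τ) :
    tailLowerBound n τ ≤ δ (withTail n τ (tailLowerBound n τ)) := by
  refine iSup₂_le fun j hj => iSup_le fun hjo => ?_
  rw [← hsat j hj]
  refine hmono fun k => ?_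
  rcases le_total j k with hjk | hkj
  · rw [min_eq_left hjk]
    by_cases hk : k.val + 2 ≤ n
    · rw [withTail_apply_of_lt hk]
      exact hτ j k (parityLE_of_odd hjo (by rw [Fin.le_def] at hjk; omega))
    · rw [withTail_apply_of_le (by omega)]
      exact le_tailLowerBound τ hj hjo
  · rw [min_eq_right hkj, withTail_apply_of_lt (by rw [Fin.le_def] at hkj; omega)]

theorem delta_le_tailUpperBound (hmono : Monotone δ) {τ : Fin d → V} (hτ : IsOrdered τ)
    (hsat : IsNSaturated δ n τ) :
    δ (withTail n τ (tailUpperBound n τ)) ≤ tailUpperBound n τ := by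
  refine le_iInf₂ fun j hj => le_iInf fun hje => ?_
  rw [← hsat j hj]
  refine hmono fun k => ?_
  rcases le_total j k with hjk | hkj
  · rw [min_eq_left hjk]
    by_cases hk : k.val + 2 ≤ n
    · rw [withTail_apply_of_lt hk]
      exact hτ k j (parityLE_of_even hje (by rw [Fin.le_def] at hjk; omega))
    · rw [withTail_apply_of_le (by omega)]
      exact tailUpperBound_le τ hj hje
  · rw [min_eq_right hkj, withTail_apply_of_lt (by rw [Fin.le_def] at hkj; omega)]

end TailBounds

section BidLemmas

variable {V : Type*} [CompleteLattice V] {d n : ℕ}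

theorem Bid_eq_withTail_of_odd {τ : Fin d → V} (hτ : IsOrdered τ) (ho : Odd n) :
    Bid n τ = withTail n τ (tailLowerBound n τ) := by
  ext i
  unfold Bid
  by_cases hi : i.val + 2 ≤ n
  · rw [if_pos hi, withTail_apply_of_lt hi]
  rw [if_neg hi, withTail_apply_of_le (by omega)]
  obtain rfl | hn3 : n = 1 ∨ 3 ≤ n := by rcases ho with ⟨k, rfl⟩; omega
  · exact (le_antisymm (iSup₂_le fun j hj => absurd hj (by omega)) bot_le).symm
  rw [if_neg (by omega), if_neg (by omega), dif_pos (by omega)]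
  have hodd : ∀ j : ℕ, j + 2 ≤ n → Odd (j + 1) → j + 1 ≤ n - 2 := by
    rintro j hj ⟨a, ha⟩; rcases ho with ⟨b, rfl⟩; omega
  refine le_antisymm (le_tailLowerBound τ (by dsimp only; omega) ?_)
    (iSup₂_le fun j hj => iSup_le fun hjo => hτ _ _ (parityLE_of_odd hjo ?_))
  · rcases ho with ⟨b, rfl⟩; exact ⟨b - 1, by dsimp only; omega⟩
  · have := hodd j hj hjo; dsimp only; omega

theorem Bid_eq_withTail_of_even {τ : Fin d → V} (hτ : IsOrdered τ) (he : Even n) (hn : 1 ≤ n) :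
    Bid n τ = withTail n τ (tailUpperBound n τ) := by
  ext i
  unfold Bid
  by_cases hi : i.val + 2 ≤ n
  · rw [if_pos hi, withTail_apply_of_lt hi]
  rw [if_neg hi, withTail_apply_of_le (by omega)]
  obtain rfl | hn4 : n = 2 ∨ 4 ≤ n := by rcases he with ⟨k, rfl⟩; omega
  · rw [if_neg (by omega), if_pos rfl]
    refine le_antisymm (le_iInf₂ fun j hj => le_iInf fun hje => ?_) le_top
    rcases hje with ⟨a, ha⟩; omega
  rw [if_neg (by omega), if_neg (by omega), dif_pos (by omega)]
  have heven : ∀ j : ℕ, j + 2 ≤ n → Even (j + 1) → j + 1 ≤ n - 2 := by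
    rintro j hj ⟨a, ha⟩; rcases he with ⟨b, rfl⟩; omega
  refine le_antisymm (le_iInf₂ fun j hj => le_iInf fun hje => hτ _ _ (parityLE_of_even hje ?_))
    (tailUpperBound_le τ (by dsimp only; omega) ?_)
  · have := heven j hj hje; dsimp only; omega
  · rcases he with ⟨b, rfl⟩; exact ⟨b - 1, by dsimp only; omega⟩

end BidLemmas

section Steps

variable {V : Type*} [CompleteLattice V] {d n : ℕ} {δ : (Fin d → V) → V}

theorem Bid_mono : Monotone (Bid (V := V) (d := d) n) := by
  intro x y h i
  unfold Bid
  split_ifs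
  exacts [h i, le_rfl, le_rfl, h _, le_rfl]

theorem Cut_mono : Monotone (Cut (V := V) (d := d) n) := by
  intro x y h i
  unfold Cut
  split_ifs
  exacts [h i, h _, le_rfl]

theorem Cut_eq_withTail {τ z : Fin d → V} (hnd : n < d)
    (hz : ∀ i : Fin d, i.val + 2 ≤ n → z i = τ i) : Cut n z = withTail n τ (z ⟨n, hnd⟩) := by
  ext i
  unfold Cut withTail
  split_ifs with hi
  exacts [hz i hi, rfl]

theorem tailLowerBound_le_tailUpperBound {τ : Fin d → V} (hτ : IsOrdered τ) (hnd : n - 1 < d) :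
    tailLowerBound n τ ≤ tailUpperBound n τ :=
  have h := mem_Icc_tailBounds hτ (fun _ _ => rfl) (i := ⟨n - 1, hnd⟩) (by dsimp only; omega)
  h.1.trans h.2

theorem withTail_mem_SN_succ {τ : Fin d → V} (hτ : IsOrdered τ) (hsat : IsNSaturated δ n τ)
    {w : V} (hw : w ∈ Icc (tailLowerBound n τ) (tailUpperBound n τ))
    (hfix : δ (withTail n τ w) = w) : withTail n τ w ∈ SN δ (n + 1) :=
  mem_SN_of_Delta_eq (isOrdered_withTail hτ hw) (isNFixed_withTail τ w (by omega))
    (by rw [Delta_withTail hsat, hfix])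

/-- The parity order makes the coordinate `v` of `z` at position `n + 1` extreme among those at
positions `≥ n`, so `z` and `withTail n τ v` are comparable; saturation of `z` at `n + 1` then
shows that `δ` moves `v` away from `u`. -/
theorem Cut_eq_withTail_of_mem_SN (hmono : Monotone δ) {τ : Fin d → V}
    (hsat : IsNSaturated δ n τ) (hn : 1 ≤ n) (hnd : n < d) {u : V} {z : Fin d → V}
    (hz : z ∈ SN δ (n + 2)) (hzu : ∀ i : Fin d, i.val + 2 ≤ n + 1 → z i = withTail n τ u i) :
    Cut n z = withTail n τ (z ⟨n, hnd⟩) ∧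
      z ⟨n, hnd⟩ ∈ Icc (tailLowerBound n τ) (tailUpperBound n τ) ∧
      (Odd n → u ≤ z ⟨n, hnd⟩ ∧ z ⟨n, hnd⟩ ≤ δ (withTail n τ (z ⟨n, hnd⟩))) ∧
      (Even n → z ⟨n, hnd⟩ ≤ u ∧ δ (withTail n τ (z ⟨n, hnd⟩)) ≤ z ⟨n, hnd⟩) := by
  obtain ⟨hzord, -, hzsat, -, -⟩ := hz
  set v := z ⟨n, hnd⟩
  obtain ⟨k, hk⟩ : ∃ k : Fin d, k.val = n - 1 := ⟨⟨n - 1, by omega⟩, rfl⟩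
  have hhead : ∀ i : Fin d, i.val + 2 ≤ n → z i = τ i := fun i hi =>
    (hzu i (by omega)).trans (withTail_apply_of_lt hi)
  have hzk : z k = u := (hzu k (by omega)).trans (withTail_apply_of_le (by omega))
  have hΔz : Delta δ z ⟨n, hnd⟩ = v := hzsat _ (by dsimp only; omega)
  have hΔv : Delta δ (withTail n τ v) ⟨n, hnd⟩ = δ (withTail n τ v) := by
    rw [Delta_withTail hsat, withTail_apply_of_le (by dsimp only; omega)]
  refine ⟨Cut_eq_withTail hnd hhead, mem_Icc_tailBounds hzord hhead (by dsimp only; omega),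
    fun ho => ?_, fun he => ?_⟩
  · have htail : ∀ i : Fin d, n ≤ i.val + 1 → z i ≤ v := fun i hi => by
      obtain hi | hi := hi.eq_or_lt
      · exact hzord _ _ (parityLE_of_odd (hi ▸ ho) (by dsimp only; omega))
      · exact hzord _ _ (parityLE_of_even (by dsimp only; exact ho.add_one) (by dsimp only; omega))
    have hz_le : z ≤ withTail n τ v := fun i => by
      by_cases hi : i.val + 2 ≤ n
      · rw [withTail_apply_of_lt hi, hhead i hi]
      · rw [withTail_apply_of_le (by omega)]
        exact htail i (by omega)
    refine ⟨hzk ▸ htail k (by omega), ?_⟩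
    calc v = Delta δ z ⟨n, hnd⟩ := hΔz.symm
      _ ≤ Delta δ (withTail n τ v) ⟨n, hnd⟩ := Delta_mono hmono hz_le _
      _ = δ (withTail n τ v) := hΔv
  · have htail : ∀ i : Fin d, n ≤ i.val + 1 → v ≤ z i := fun i hi => by
      obtain hi | hi := hi.eq_or_lt
      · exact hzord _ _ (parityLE_of_even (hi ▸ he) (by dsimp only; omega))
      · exact hzord _ _ (parityLE_of_odd (by dsimp only; exact he.add_one) (by dsimp only; omega))
    have hle_z : withTail n τ v ≤ z := fun i => by
      by_cases hi : i.val + 2 ≤ n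
      · rw [withTail_apply_of_lt hi, hhead i hi]
      · rw [withTail_apply_of_le (by omega)]
        exact htail i (by omega)
    refine ⟨hzk ▸ htail k (by omega), ?_⟩
    calc δ (withTail n τ v) = Delta δ (withTail n τ v) ⟨n, hnd⟩ := hΔv.symm
      _ ≤ Delta δ z ⟨n, hnd⟩ := Delta_mono hmono hle_z _
      _ = v := hΔz

end Steps

section Phi

variable {V : Type*} [CompleteLattice V] {d n : ℕ} {δ : (Fin d → V) → V}

theorem exists_limUp_step_withTail (hmono : Monotone δ) (hn : 1 ≤ n) (hnd : n < d) (ho : Odd n)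
    {G : PFunc (Fin d → V)} (hGmono : MonotonePF G) (hG : NStableOn G (n + 1) (SN δ (n + 1)))
    (hGmaps : MapsTo G.toFun (SN δ (n + 1)) (SN δ (n + 2))) {τ : Fin d → V} (hτ : τ ∈ SN δ n) :
    ∃ w ∈ Icc (tailLowerBound n τ) (tailUpperBound n τ), δ (withTail n τ w) = w ∧
      Bid n τ ∈ (limUp (((limUp (PFunc.total (Delta δ))).comp G).comp
        (PFunc.total (Cut n)))).dom ∧
      (limUp (((limUp (PFunc.total (Delta δ))).comp G).comp
        (PFunc.total (Cut n)))).toFun (Bid n τ) = withTail n τ w := by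
  obtain ⟨hord, -, hsat, -, -⟩ := hτ
  rw [Bid_eq_withTail_of_odd hord ho]
  refine exists_limUp_step_apply (t := withTailEmb τ (by omega))
    (g := fun w => δ (withTail n τ w)) (fun S hS => withTail_sSup τ hS) (Delta_mono hmono)
    (Delta_withTail hsat)
    hGmono Cut_mono (tailLowerBound_le_delta hmono hord hsat)
    (tailLowerBound_le_tailUpperBound hord (by omega)) (delta_le_tailUpperBound hmono hord hsat)
    fun u hu hfix => ?_
  have hy := withTail_mem_SN_succ hord hsat hu hfix
  obtain ⟨hcut, hv, hodd, -⟩ :=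
    Cut_eq_withTail_of_mem_SN hmono hsat hn hnd (hGmaps hy) (hG.2 _ hy)
  exact ⟨hG.1 hy, _, ⟨(hodd ho).1, hv.2⟩, (hodd ho).2, hcut⟩

theorem exists_limDown_step_withTail (hmono : Monotone δ) (hn : 1 ≤ n) (hnd : n < d)
    (he : Even n) {G : PFunc (Fin d → V)} (hGmono : MonotonePF G)
    (hG : NStableOn G (n + 1) (SN δ (n + 1)))
    (hGmaps : MapsTo G.toFun (SN δ (n + 1)) (SN δ (n + 2))) {τ : Fin d → V} (hτ : τ ∈ SN δ n) :
    ∃ w ∈ Icc (tailLowerBound n τ) (tailUpperBound n τ), δ (withTail n τ w) = w ∧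
      Bid n τ ∈ (limDown (((limDown (PFunc.total (Delta δ))).comp G).comp
        (PFunc.total (Cut n)))).dom ∧
      (limDown (((limDown (PFunc.total (Delta δ))).comp G).comp
        (PFunc.total (Cut n)))).toFun (Bid n τ) = withTail n τ w := by
  obtain ⟨hord, -, hsat, -, -⟩ := hτ
  rw [Bid_eq_withTail_of_even hord he hn]
  refine exists_limDown_step_apply (t := withTailEmb τ (by omega))
    (g := fun w => δ (withTail n τ w)) (fun S hS => withTail_sInf τ hS) (Delta_mono hmono)
    (Delta_withTail hsat)
    hGmono Cut_mono (delta_le_tailUpperBound hmono hord hsat)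
    (tailLowerBound_le_tailUpperBound hord (by omega)) (tailLowerBound_le_delta hmono hord hsat)
    fun u hu hfix => ?_
  have hy := withTail_mem_SN_succ hord hsat hu hfix
  obtain ⟨hcut, hv, -, heven⟩ :=
    Cut_eq_withTail_of_mem_SN hmono hsat hn hnd (hGmaps hy) (hG.2 _ hy)
  exact ⟨hG.1 hy, _, ⟨hv.1, (heven he).1⟩, (heven he).2, hcut⟩

theorem exists_limDown_Delta_withTail (hmono : Monotone δ) (hn : 1 ≤ n) (hnd : n ≤ d)
    (he : Even n) {τ : Fin d → V} (hτ : τ ∈ SN δ n) :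
    ∃ w ∈ Icc (tailLowerBound n τ) (tailUpperBound n τ), δ (withTail n τ w) = w ∧
      Bid n τ ∈ (limDown (PFunc.total (Delta δ))).dom ∧
      (limDown (PFunc.total (Delta δ))).toFun (Bid n τ) = withTail n τ w := by
  obtain ⟨hord, -, hsat, -, -⟩ := hτ
  rw [Bid_eq_withTail_of_even hord he hn]
  exact exists_limDown_total_apply (t := withTailEmb τ (by omega))
    (g := fun w => δ (withTail n τ w)) (fun S hS => withTail_sInf τ hS) (Delta_mono hmono)
    (Delta_withTail hsat)
    (delta_le_tailUpperBound hmono hord hsat) (tailLowerBound_le_tailUpperBound hord (by omega))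
    (tailLowerBound_le_delta hmono hord hsat)

theorem nStableOn_Bid_comp {L : PFunc (Fin d → V)}
    (hL : ∀ τ ∈ SN δ n, ∃ w ∈ Icc (tailLowerBound n τ) (tailUpperBound n τ),
      δ (withTail n τ w) = w ∧ Bid n τ ∈ L.dom ∧ L.toFun (Bid n τ) = withTail n τ w) :
    NStableOn ((PFunc.total (Bid n)).comp L) n (SN δ n) ∧
      MapsTo ((PFunc.total (Bid n)).comp L).toFun (SN δ n) (SN δ (n + 1)) := by
  choose w hw hfix hdom hval using hL
  refine ⟨⟨fun τ hτ => ⟨trivial, hdom τ hτ⟩, fun τ hτ i hi => ?_⟩, fun τ hτ => ?_⟩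
  · change L.toFun (Bid n τ) i = τ i
    rw [hval τ hτ, withTail_apply_of_lt hi]
  · change L.toFun (Bid n τ) ∈ _
    rw [hval τ hτ]
    exact withTail_mem_SN_succ hτ.1 hτ.2.2.1 (hw τ hτ) (hfix τ hτ)

theorem Phi_self : Phi δ d = (PFunc.total (Bid d)).comp (limDown (PFunc.total (Delta δ))) := by
  rw [Phi, Nat.sub_self]
  rfl

theorem Phi_of_lt (h : n < d) :
    Phi δ n = if Odd n then
      (PFunc.total (Bid n)).comp (limUp (((limUp (PFunc.total (Delta δ))).comp
        (Phi δ (n + 1))).comp (PFunc.total (Cut n))))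
    else
      (PFunc.total (Bid n)).comp (limDown (((limDown (PFunc.total (Delta δ))).comp
        (Phi δ (n + 1))).comp (PFunc.total (Cut n)))) := by
  obtain ⟨k, hk⟩ : ∃ k, d - n = k + 1 := ⟨d - n - 1, by omega⟩
  rw [Phi, Phi, hk, PhiAux, show d - (k + 1) = n by omega, show d - (n + 1) = k by omega]

theorem monotonePF_Phi (δ : (Fin d → V) → V) (n : ℕ) : MonotonePF (Phi δ n) := by
  unfold Phi
  cases d - n with
  | zero => exact (monotonePF_total Bid_mono).comp (monotonePF_limDown _)
  | succ k =>
    rw [PhiAux]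
    split_ifs
    exacts [(monotonePF_total Bid_mono).comp (monotonePF_limUp _),
      (monotonePF_total Bid_mono).comp (monotonePF_limDown _)]

theorem Phi_spec (hde : Even d) (hmono : Monotone δ) (hn : 1 ≤ n) (hnd : n ≤ d) :
    NStableOn (Phi δ n) n (SN δ n) ∧ MapsTo (Phi δ n).toFun (SN δ n) (SN δ (n + 1)) := by
  induction hnd using Nat.decreasingInduction with
  | self =>
    rw [Phi_self]
    exact nStableOn_Bid_comp fun τ hτ => exists_limDown_Delta_withTail hmono hn le_rfl hde hτ
  | of_succ k hk ih =>
    obtain ⟨hstable, hmaps⟩ := ih (by omega)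
    rw [Phi_of_lt hk]
    split_ifs with ho
    · exact nStableOn_Bid_comp fun τ hτ => exists_limUp_step_withTail hmono hn hk ho
        (monotonePF_Phi δ _) hstable hmaps hτ
    · exact nStableOn_Bid_comp fun τ hτ => exists_limDown_step_withTail hmono hn hk
        (Nat.not_odd_iff_even.1 ho) (monotonePF_Phi δ _) hstable hmaps hτ

end Phi

theorem stmt11_general {V : Type*} [CompleteLattice V] {d : ℕ} (hde : Even d)
    (δ : (Fin d → V) → V) (hmono : Monotone δ)
    (n : ℕ) (hn1 : 1 ≤ n) (hnd : n ≤ d) :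
    SN δ n ⊆ (Phi δ n).dom ∧
    (∀ τ ∈ SN δ n, (Phi δ n).toFun τ ∈ SN δ (n + 1)) ∧
    NStableOn (Phi δ n) n (SN δ n) := by
  obtain ⟨hstable, hmaps⟩ := Phi_spec hde hmono hn1 hnd
  exact ⟨hstable.1, hmaps, hstable⟩

/-- For every `n ∈ {1,…,d}`: `S_n ⊆ dom(Φ_n)`, `Φ_n` maps `S_n`
into `S_{n+1}`, and `Φ_n` is `n`-stable on `S_n`. -/
theorem stmt11 {V : Type*} [CompleteLattice V] {d : ℕ} (hd : 1 ≤ d) (hde : Even d)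
    (δ : (Fin d → V) → V) (hmono : Monotone δ) (hcont : ChainContinuous δ)
    (n : ℕ) (hn1 : 1 ≤ n) (hnd : n ≤ d) :
    SN δ n ⊆ (Phi δ n).dom ∧
    (∀ τ ∈ SN δ n, (Phi δ n).toFun τ ∈ SN δ (n + 1)) ∧
    NStableOn (Phi δ n) n (SN δ n) :=
  stmt11_general hde δ hmono n hn1 hnd
end

section
/- For every monotone function f : V³ → V on a complete lattice V, we have μx.νy.μz.f(x, y, x∨z) = μx.νy.μz.f(x, y, z). -/
/-- `μx.f(x)`, the least fixed point of a monotone `f` (Knaster–Tarski). -/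
noncomputable def lfpOf {V : Type*} [CompleteLattice V] (f : V → V) : V :=
  sInf {x | f x ≤ x}

/-- `νx.f(x)`, the greatest fixed point of a monotone `f` (Knaster–Tarski). -/
noncomputable def gfpOf {V : Type*} [CompleteLattice V] (f : V → V) : V :=
  sSup {x | x ≤ f x}

theorem lfpOf_le {V : Type*} [CompleteLattice V] {f : V → V} {c : V} (h : f c ≤ c) :
    lfpOf f ≤ c := sInf_le h

theorem le_gfpOf {V : Type*} [CompleteLattice V] {f : V → V} {c : V} (h : c ≤ f c) :
    c ≤ gfpOf f := le_sSup h

theorem lfpOf_fixed {V : Type*} [CompleteLattice V] {f : V → V} (hf : Monotone f) :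
    f (lfpOf f) = lfpOf f := by
  have h1 : f (lfpOf f) ≤ lfpOf f :=
    le_sInf fun x hx => (hf (sInf_le hx)).trans hx
  exact le_antisymm h1 (sInf_le (hf h1))

theorem gfpOf_fixed {V : Type*} [CompleteLattice V] {f : V → V} (hf : Monotone f) :
    f (gfpOf f) = gfpOf f := by
  have h1 : gfpOf f ≤ f (gfpOf f) :=
    sSup_le fun x hx => hx.trans (hf (le_sSup hx))
  exact le_antisymm (le_sSup (hf h1)) h1

theorem lfpOf_mono {V : Type*} [CompleteLattice V] {f g : V → V} (h : ∀ x, f x ≤ g x) :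
    lfpOf f ≤ lfpOf g :=
  le_sInf fun x hx => sInf_le ((h x).trans hx)

theorem gfpOf_mono {V : Type*} [CompleteLattice V] {f g : V → V} (h : ∀ x, f x ≤ g x) :
    gfpOf f ≤ gfpOf g :=
  sSup_le fun x hx => le_sSup (hx.trans (h x))

/-- For every monotone `f : V³ → V` on a complete lattice `V`,
`μx.νy.μz.f(x, y, x∨z) = μx.νy.μz.f(x, y, z)`. -/
theorem stmt13 {V : Type*} [CompleteLattice V] (f : V → V → V → V)
    (hf : Monotone fun p : V × V × V => f p.1 p.2.1 p.2.2) :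
    lfpOf (fun x => gfpOf (fun y => lfpOf (fun z => f x y (x ⊔ z)))) =
      lfpOf (fun x => gfpOf (fun y => lfpOf (fun z => f x y z))) := by
  have m3 : ∀ {x1 x2 y1 y2 z1 z2 : V}, x1 ≤ x2 → y1 ≤ y2 → z1 ≤ z2 →
      f x1 y1 z1 ≤ f x2 y2 z2 := fun hx hy hz =>
    hf (Prod.mk_le_mk.2 ⟨hx, Prod.mk_le_mk.2 ⟨hy, hz⟩⟩)
  set B : V → V := fun x => gfpOf (fun y => lfpOf (fun z => f x y z)) with hB
  set b : V := lfpOf B with hb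
  -- monotonicity of B
  have hBmono : Monotone B := fun x x' hx =>
    gfpOf_mono fun y => lfpOf_mono fun z => m3 hx le_rfl le_rfl
  have hbfix : B b = b := lfpOf_fixed hBmono
  -- b ≤ lhs
  have h1 : lfpOf B ≤ lfpOf (fun x => gfpOf (fun y => lfpOf (fun z => f x y (x ⊔ z)))) :=
    lfpOf_mono fun x => gfpOf_mono fun y => lfpOf_mono fun z =>
      m3 le_rfl le_rfl le_sup_right
  -- lhs ≤ b : show b is a prefixed point of the outer map of the lhs
  have key : gfpOf (fun y => lfpOf (fun z => f b y (b ⊔ z))) ≤ b := by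
    apply sSup_le
    intro y hy
    simp only [Set.mem_setOf_eq] at hy
    set m : V := lfpOf (fun z => f b (y ⊔ b) z) with hm
    have hmfix : f b (y ⊔ b) m = m :=
      lfpOf_fixed (fun z z' hz => m3 le_rfl le_rfl hz)
    -- b ≤ m
    have hg : (lfpOf fun z => f b (B b) z) = B b :=
      gfpOf_fixed (f := fun u => lfpOf fun z => f b u z)
        (fun u u' hu => lfpOf_mono fun z => m3 le_rfl hu le_rfl)
    rw [hbfix] at hg
    have hbm : b ≤ m := by
      rw [← hg]
      exact lfpOf_mono fun z => m3 le_rfl le_sup_right le_rfl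
    -- μz.f(b, y⊔b, b⊔z) ≤ m
    have h2 : lfpOf (fun z => f b (y ⊔ b) (b ⊔ z)) ≤ m := by
      apply lfpOf_le
      have hsup : b ⊔ m = m := sup_eq_right.2 hbm
      rw [hsup, hmfix]
    have hym : y ≤ m :=
      hy.trans ((lfpOf_mono fun z => m3 le_rfl le_sup_left le_rfl).trans h2)
    have hgb : y ⊔ b ≤ B b :=
      le_gfpOf (f := fun u => lfpOf fun z => f b u z) (sup_le hym hbm)
    exact le_sup_left.trans (hgb.trans hbfix.le)
  have h3 : lfpOf (fun x => gfpOf (fun y => lfpOf (fun z => f x y (x ⊔ z)))) ≤ b :=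
    lfpOf_le key
  exact le_antisymm h3 h1
end
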